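/- arXiv:2512.24334 — 3 statements merged into one kernel-verified Lean document; each statement's English description precedes it below -/
import Mathlib

section
/- Let X be a real-valued random variable on a probability space, let g > 0 and s > 0 be reals, and assume: (i) the law of X is invariant under the reflection x ↦ 2g − x; (ii) for every real y > 0, if y/s > 2/√3 then P(|X − g| ≥ y) ≤ 4s²/(9y²), and if y/s ≤ 2/√3 then P(|X − g| ≥ y) ≤ 1 − y/(√3·s). Then: if g/s > 2/√3, P(X ≤ 0) ≤ 2s²/(9g²); otherwise P(X ≤ 0) ≤ 1/2 − g/(2√3·s); and in all cases P(X ≤ 0) < 1/2. -/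
open MeasureTheory
open scoped ENNReal

/-- Lemma 3 (Failure Probability) of OptiVote: for a stochastic gradient coordinate `X`
with positive mean `g`, standard deviation scale `s`, whose law is symmetric about `g`
and satisfies the two-regime Gauss tail bound, the sign-error probability `P(X ≤ 0)`
is bounded by `2s²/(9g²)` when `g/s > 2/√3` and by `1/2 − g/(2√3·s)` otherwise,
and is in all cases strictly less than `1/2`. -/
theorem optivote_failure_probability
    {Ω : Type*} [MeasurableSpace Ω] (μ : Measure Ω) [IsProbabilityMeasure μ]
    (X : Ω → ℝ) (hX : Measurable X) (g s : ℝ) (hg : 0 < g) (hs : 0 < s)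
    (hsym : (μ.map X).map (fun x : ℝ => 2 * g - x) = μ.map X)
    (htail : ∀ y : ℝ, 0 < y →
      (y / s > 2 / Real.sqrt 3 →
        μ {ω | y ≤ |X ω - g|} ≤ ENNReal.ofReal (4 * s ^ 2 / (9 * y ^ 2))) ∧
      (y / s ≤ 2 / Real.sqrt 3 →
        μ {ω | y ≤ |X ω - g|} ≤ ENNReal.ofReal (1 - y / (Real.sqrt 3 * s)))) :
    ((g / s > 2 / Real.sqrt 3 →
        μ {ω | X ω ≤ 0} ≤ ENNReal.ofReal (2 * s ^ 2 / (9 * g ^ 2))) ∧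
     (¬ (g / s > 2 / Real.sqrt 3) →
        μ {ω | X ω ≤ 0} ≤ ENNReal.ofReal (1 / 2 - g / (2 * Real.sqrt 3 * s)))) ∧
    μ {ω | X ω ≤ 0} < (1 / 2 : ℝ≥0∞) := by
  have h3 : (0:ℝ) < Real.sqrt 3 := Real.sqrt_pos.mpr (by norm_num)
  have h3sq : Real.sqrt 3 ^ 2 = 3 := Real.sq_sqrt (by norm_num)
  -- symmetry: P(X ≤ 0) = P(2g ≤ X)
  have hfm : Measurable (fun x : ℝ => 2 * g - x) := measurable_const.sub measurable_id
  have hmapIic : (μ.map X) (Set.Iic 0) = μ {ω | X ω ≤ 0} := by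
    rw [Measure.map_apply hX measurableSet_Iic]; rfl
  have hmapIci : (μ.map X) (Set.Ici (2*g)) = μ {ω | 2*g ≤ X ω} := by
    rw [Measure.map_apply hX measurableSet_Ici]; rfl
  have hsym' : μ {ω | X ω ≤ 0} = μ {ω | 2*g ≤ X ω} := by
    have h := congrArg (fun ν : Measure ℝ => ν (Set.Iic 0)) hsym
    rw [Measure.map_apply hfm measurableSet_Iic] at h
    have hpre : (fun x : ℝ => 2*g - x) ⁻¹' Set.Iic 0 = Set.Ici (2*g) := by
      ext x
      simp only [Set.mem_preimage, Set.mem_Iic, Set.mem_Ici]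
      constructor <;> intro hx <;> linarith
    rw [hpre, hmapIci, hmapIic] at h
    exact h.symm
  -- 2 * P(X ≤ 0) ≤ P(g ≤ |X - g|)
  have hdouble : μ {ω | X ω ≤ 0} + μ {ω | X ω ≤ 0} ≤ μ {ω | g ≤ |X ω - g|} := by
    nth_rewrite 2 [hsym']
    rw [← measure_union]
    · apply measure_mono
      rintro ω (h | h) <;> simp only [Set.mem_setOf_eq] at *
      · rw [le_abs]; right; linarith
      · rw [le_abs]; left; linarith
    · rw [Set.disjoint_left]
      intro ω h1 h2
      simp only [Set.mem_setOf_eq] at h1 h2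
      linarith
    · exact hX measurableSet_Ici
  have key : ∀ c : ℝ, μ {ω | g ≤ |X ω - g|} ≤ ENNReal.ofReal c →
      μ {ω | X ω ≤ 0} ≤ ENNReal.ofReal (c / 2) := by
    intro c hc
    have h2 : μ {ω | X ω ≤ 0} * 2 ≤ ENNReal.ofReal c := by
      calc μ {ω | X ω ≤ 0} * 2 = μ {ω | X ω ≤ 0} + μ {ω | X ω ≤ 0} := by ring
        _ ≤ _ := le_trans hdouble hc
    rw [ENNReal.ofReal_div_of_pos (by norm_num : (0:ℝ) < 2)]
    rw [ENNReal.le_div_iff_mul_le (by simp) (by simp)]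
    simpa using h2
  have ht := htail g hg
  have main : (g / s > 2 / Real.sqrt 3 →
        μ {ω | X ω ≤ 0} ≤ ENNReal.ofReal (2 * s ^ 2 / (9 * g ^ 2))) ∧
     (¬ (g / s > 2 / Real.sqrt 3) →
        μ {ω | X ω ≤ 0} ≤ ENNReal.ofReal (1 / 2 - g / (2 * Real.sqrt 3 * s))) := by
    constructor
    · intro hgs
      have := key _ (ht.1 hgs)
      convert this using 2
      ring
    · intro hgs
      have := key _ (ht.2 (not_lt.mp hgs))
      convert this using 2
      field_simp
  refine ⟨main, ?_⟩
  have hhalf : (1/2 : ℝ≥0∞) = ENNReal.ofReal (1/2) := by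
    rw [ENNReal.ofReal_div_of_pos (by norm_num : (0:ℝ) < 2)]
    norm_num
  rw [hhalf]
  by_cases hgs : g / s > 2 / Real.sqrt 3
  · refine lt_of_le_of_lt (main.1 hgs) ?_
    rw [ENNReal.ofReal_lt_ofReal_iff (by norm_num)]
    have h1 : 2 * s < g * Real.sqrt 3 := by
      rw [gt_iff_lt, div_lt_div_iff₀ h3 hs] at hgs
      linarith
    rw [div_lt_iff₀ (by positivity)]
    nlinarith [sq_nonneg s, sq_nonneg g, mul_pos hg hs]
  · refine lt_of_le_of_lt (main.2 hgs) ?_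
    rw [ENNReal.ofReal_lt_ofReal_iff (by norm_num)]
    have : 0 < g / (2 * Real.sqrt 3 * s) := by positivity
    linarith
end

section
/- Let q be a natural number, F : (Fin q → ℝ) → ℝ, w : Fin q → ℝ a point, g : Fin q → ℝ, and L : Fin q → ℝ with L i ≥ 0 for all i, such that for every w' : Fin q → ℝ, F(w') ≤ F(w) + Σᵢ g i · (w' i − w i) + (1/2)·Σᵢ L i · (w' i − w i)². Then for every real η > 0 and every v : Fin q → ℝ with v i ∈ {−1, +1} for all i, F(w − η·v) − F(w) ≤ −η·Σᵢ |g i| + (η²/2)·Σᵢ L i + 2η·Σᵢ |g i| · 𝟙[v i ≠ sign(g i)], where sign denotes the real sign function with sign(0) = 0 and 𝟙 is the 0/1 indicator. -/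
open Finset

/-- Per-round descent inequality in the proof of Theorem 1 of OptiVote: under the
coordinate-wise smoothness quadratic upper bound, a signSGD step `w ← w − η·v` along a
sign vector `v ∈ {−1,+1}^q` satisfies
`F(w − η·v) − F(w) ≤ −η‖g‖₁ + (η²/2)‖L‖₁ + 2η·Σᵢ |gᵢ|·𝟙[vᵢ ≠ sign(gᵢ)]`. -/
theorem optivote_descent_inequality (q : ℕ)
    (F : (Fin q → ℝ) → ℝ) (w g L : Fin q → ℝ)
    (hL : ∀ i, 0 ≤ L i)
    (hsmooth : ∀ w' : Fin q → ℝ,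
      F w' ≤ F w + (∑ i, g i * (w' i - w i)) + (1 / 2) * ∑ i, L i * (w' i - w i) ^ 2)
    (η : ℝ) (hη : 0 < η) (v : Fin q → ℝ) (hv : ∀ i, v i = -1 ∨ v i = 1) :
    F (fun i => w i - η * v i) - F w
      ≤ -η * (∑ i, |g i|) + (η ^ 2 / 2) * (∑ i, L i)
        + 2 * η * ∑ i, |g i| * (if v i ≠ Real.sign (g i) then (1 : ℝ) else 0) := by
  have key := hsmooth (fun i => w i - η * v i)
  simp only [sub_sub_cancel_left] at key
  have hq : ∀ i, L i * (-(η * v i)) ^ 2 = L i * η ^ 2 := by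
    intro i
    rcases hv i with h | h <;> rw [h] <;> ring
  have hlin : ∀ i, g i * (-(η * v i))
      ≤ -η * |g i| + 2 * η * (|g i| * (if v i ≠ Real.sign (g i) then (1 : ℝ) else 0)) := by
    intro i
    by_cases hvi : v i = Real.sign (g i)
    · simp only [hvi, ne_eq, not_true_eq_false, if_false, mul_zero, add_zero]
      have : g i * Real.sign (g i) = |g i| := by
        rcases lt_trichotomy (g i) 0 with h | h | h
        · rw [Real.sign_of_neg h, abs_of_neg h]; ring
        · exfalso; rcases hv i with h' | h' <;> rw [hvi, h, Real.sign_zero] at h' <;> norm_num at h'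
        · rw [Real.sign_of_pos h, abs_of_pos h]; ring
      nlinarith
    · simp only [ne_eq, hvi, not_false_eq_true, if_true, mul_one]
      have habs : |g i * v i| = |g i| := by
        rw [abs_mul]; rcases hv i with h | h <;> simp [h]
      have := neg_abs_le (g i * v i)
      rw [habs] at this
      nlinarith
  calc F (fun i => w i - η * v i) - F w
      ≤ (∑ i, g i * (-(η * v i))) + (1 / 2) * ∑ i, L i * (-(η * v i)) ^ 2 := by linarith
    _ ≤ (∑ i, (-η * |g i| + 2 * η * (|g i| * (if v i ≠ Real.sign (g i) then (1 : ℝ) else 0))))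
        + (1 / 2) * ∑ i, L i * η ^ 2 := by
        refine add_le_add (Finset.sum_le_sum fun i _ => hlin i) ?_
        rw [Finset.sum_congr rfl fun i _ => hq i]
    _ = -η * (∑ i, |g i|) + (η ^ 2 / 2) * (∑ i, L i)
        + 2 * η * ∑ i, |g i| * (if v i ≠ Real.sign (g i) then (1 : ℝ) else 0) := by
        rw [Finset.sum_add_distrib, ← Finset.mul_sum, ← Finset.mul_sum, ← Finset.sum_mul]
        ring
end

section
/- Let M ≥ 1 be a natural number and ξ > 0, γ > 0, L1 > 0, S ≥ 0, F* real numbers, and let N ≥ 1 be a natural number. Define d = N/γ, η = 1/√(L1·d), and ρ = M/(M + 2/ξ). Let F : ℕ → ℝ with F(N) ≥ F* and a : ℕ → ℝ be sequences such that for every n < N, F(n+1) ≤ F(n) − η·ρ·a(n) + (η²·L1)/2 + (2√2/3)·η·ρ·S/√d. Then (1/N)·Σ_{n=0}^{N−1} a(n) ≤ (1/√N)·( δ·√L1·(F(0) − F* + γ/2) + (2√2/3)·√γ·S ), where δ = (1 + 2/(ξ·M))/√γ. -/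
open Finset

/-- Deterministic core of Theorem 1 (Convergence Rate) of OptiVote: with mini-batch
size `d = N/γ`, learning rate `η = 1/√(L1·d)` and effective descent factor
`ρ = M/(M + 2/ξ)`, the per-round descent bound yields
`(1/N)·Σₙ a(n) ≤ (1/√N)·(δ·√L1·(F(0) − F* + γ/2) + (2√2/3)·√γ·S)` with
`δ = (1 + 2/(ξ·M))/√γ`. -/
theorem optivote_convergence_rate (M : ℕ) (hM : 1 ≤ M)
    (ξ γ L1 S Fstar : ℝ) (hξ : 0 < ξ) (hγ : 0 < γ) (hL1 : 0 < L1) (hS : 0 ≤ S)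
    (N : ℕ) (hN : 1 ≤ N)
    (d η ρ δ : ℝ)
    (hd : d = (N : ℝ) / γ)
    (hη : η = 1 / Real.sqrt (L1 * d))
    (hρ : ρ = (M : ℝ) / ((M : ℝ) + 2 / ξ))
    (hδ : δ = (1 + 2 / (ξ * (M : ℝ))) / Real.sqrt γ)
    (F a : ℕ → ℝ) (hFstar : Fstar ≤ F N)
    (hstep : ∀ n < N,
      F (n + 1) ≤ F n - η * ρ * a n + (η ^ 2 * L1) / 2
        + (2 * Real.sqrt 2 / 3) * η * ρ * S / Real.sqrt d) :
    (1 / (N : ℝ)) * ∑ n ∈ Finset.range N, a n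
      ≤ (1 / Real.sqrt N) *
          (δ * Real.sqrt L1 * (F 0 - Fstar + γ / 2)
            + (2 * Real.sqrt 2 / 3) * Real.sqrt γ * S) := by
  have hN0 : (0:ℝ) < N := by exact_mod_cast hN
  have hM0 : (0:ℝ) < M := by exact_mod_cast hM
  set sN := Real.sqrt N with hsN
  set sγ := Real.sqrt γ with hsγdef
  set sL := Real.sqrt L1 with hsLdef
  have hsN0 : 0 < sN := Real.sqrt_pos.2 hN0
  have hsγ0 : 0 < sγ := Real.sqrt_pos.2 hγ
  have hsL0 : 0 < sL := Real.sqrt_pos.2 hL1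
  have hsN2 : sN ^ 2 = (N:ℝ) := Real.sq_sqrt hN0.le
  have hsγ2 : sγ ^ 2 = γ := Real.sq_sqrt hγ.le
  have hsL2 : sL ^ 2 = L1 := Real.sq_sqrt hL1.le
  have hd0 : 0 < d := by rw [hd]; positivity
  have hsd : Real.sqrt d = sN / sγ := by
    rw [hd, Real.sqrt_div hN0.le]
  have hη' : η = sγ / (sL * sN) := by
    rw [hη, Real.sqrt_mul hL1.le, hsd, ← hsLdef]
    field_simp
  have hden : (0:ℝ) < (M:ℝ) + 2 / ξ := by positivity
  have hρ0 : 0 < ρ := by rw [hρ]; positivity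
  have hη0 : 0 < η := by rw [hη']; positivity
  set c : ℝ := 2 * Real.sqrt 2 / 3 with hc
  obtain ⟨K, hK⟩ : ∃ K : ℝ, K = (η ^ 2 * L1) / 2 + c * η * ρ * S / Real.sqrt d :=
    ⟨_, rfl⟩
  have key : ∀ m, m ≤ N → η * ρ * (∑ n ∈ Finset.range m, a n) ≤ F 0 - F m + m * K := by
    intro m hm
    induction m with
    | zero => simp
    | succ k ih =>
      have hk : k < N := hm
      have ihk := ih hk.le
      have hs := hstep k hk
      rw [Finset.sum_range_succ, mul_add]
      push_cast
      linarith [hs, ihk, hK]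
  have hsum : η * ρ * (∑ n ∈ Finset.range N, a n) ≤ F 0 - Fstar + N * K := by
    have := key N le_rfl
    linarith
  -- key algebraic identity
  have heq : (1 / sN) * (δ * sL * (F 0 - Fstar + γ / 2) + c * sγ * S)
      = (F 0 - Fstar + N * K) / (η * ρ * N) := by
    rw [hK, hδ, hρ, hη', hsd, ← hsN2, ← hsγ2, ← hsL2]
    have hξ' := hξ.ne'
    have hM' := hM0.ne'
    have hden' : (0:ℝ) < (M:ℝ) + 2 / ξ := hden
    field_simp
    ring
  have hfinal : (1 / (N:ℝ)) * ∑ n ∈ Finset.range N, a n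
      ≤ (F 0 - Fstar + N * K) / (η * ρ * N) := by
    have h1 : (1 / (N:ℝ)) * ∑ n ∈ Finset.range N, a n
        = (η * ρ * (∑ n ∈ Finset.range N, a n)) * (η * ρ * N)⁻¹ := by
      field_simp
    rw [h1, div_eq_mul_inv]
    apply mul_le_mul_of_nonneg_right hsum
    positivity
  calc (1 / (N:ℝ)) * ∑ n ∈ Finset.range N, a n
      ≤ (F 0 - Fstar + N * K) / (η * ρ * N) := hfinal
    _ = (1 / sN) * (δ * sL * (F 0 - Fstar + γ / 2) + c * sγ * S) := heq.symm
end
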